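/- arXiv:1902.05331 — 4 statements merged into one kernel-verified Lean document; each statement's English description precedes it below -/
import Mathlib

section
/- For the Černý automaton with n ≥ 2 states (states 0,…,n−1, symbol a mapping i to i+1 mod n, symbol b mapping 0 to 1 and fixing all other states), the word b(a^{n−1}b)^{n−2} maps every state to the same state, i.e. it is a synchronizing word. -/
/-!
After the first letter `b` no state is `0`. Identify the remaining states with `1, …, n - 1`.
The block `a^{n-1} b` acts as `m ↦ b (m - 1)`, which is `m ↦ max (m - 1) 1`: it shifts every
state down by one, except that `1` goes to `0` and then back to `1`. So `n - 2` blocks bring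
every state `m ≤ n - 1` down to `1`.
-/

/-- Action of a word (list of functions) on a state, applied left to right. -/
def applyWord {Q : Type*} (w : List (Q → Q)) (q : Q) : Q :=
  w.foldl (fun q f => f q) q

section applyWord

variable {Q : Type*}

theorem applyWord_append (w₁ w₂ : List (Q → Q)) (q : Q) :
    applyWord (w₁ ++ w₂) q = applyWord w₂ (applyWord w₁ q) :=
  List.foldl_append

theorem applyWord_singleton (f : Q → Q) (q : Q) : applyWord [f] q = f q := rfl

theorem applyWord_replicate (k : ℕ) (f : Q → Q) (q : Q) :
    applyWord (List.replicate k f) q = f^[k] q := by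
  induction k generalizing q with
  | zero => rfl
  | succ k ih => exact ih (f q)

theorem applyWord_flatten_replicate (k : ℕ) (w : List (Q → Q)) (q : Q) :
    applyWord (List.replicate k w).flatten q = (applyWord w)^[k] q := by
  induction k generalizing q with
  | zero => rfl
  | succ k ih => rw [List.replicate_succ, List.flatten_cons, applyWord_append, ih]; rfl

end applyWord

section Cerny

variable {n : ℕ} {b : ZMod n → ZMod n}

theorem applyWord_replicate_pred_add_one_append [NeZero n] (f : ZMod n → ZMod n) (q : ZMod n) :
    applyWord (List.replicate (n - 1) (· + 1) ++ [f]) q = f (q - 1) := by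
  have hpred : ((n - 1 : ℕ) : ZMod n) = -1 := by
    rw [Nat.cast_pred (Nat.pos_of_neZero n), ZMod.natCast_self, zero_sub]
  rw [applyWord_append, applyWord_replicate, add_right_iterate, nsmul_one, hpred,
    applyWord_singleton, sub_eq_add_neg]

theorem cerny_b_ne_zero [Nontrivial (ZMod n)] (hb0 : b 0 = 1) (hb : ∀ i, i ≠ 0 → b i = i)
    (q : ZMod n) : b q ≠ 0 := by
  by_cases hq : q = 0
  · rw [hq, hb0]
    exact one_ne_zero
  · rwa [hb q hq]

theorem cerny_b_natCast_sub_one (hb0 : b 0 = 1) (hb : ∀ i, i ≠ 0 → b i = i)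
    {m : ℕ} (hm : 1 ≤ m) (hmn : m < n) :
    b ((m : ZMod n) - 1) = ((max (m - 1) 1 : ℕ) : ZMod n) := by
  obtain rfl | hm : m = 1 ∨ 2 ≤ m := by omega
  · simp [hb0]
  · have hcast : (m : ZMod n) - 1 = ((m - 1 : ℕ) : ZMod n) := by
      rw [Nat.cast_sub (by omega), Nat.cast_one]
    have hne : ((m - 1 : ℕ) : ZMod n) ≠ 0 := by
      rw [Ne, ZMod.natCast_eq_zero_iff]
      exact Nat.not_dvd_of_pos_of_lt (by omega) (by omega)
    rw [hcast, hb _ hne, max_eq_left (by omega)]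

theorem cerny_block_natCast [NeZero n] (hb0 : b 0 = 1) (hb : ∀ i, i ≠ 0 → b i = i)
    {m : ℕ} (hm : 1 ≤ m) (hmn : m < n) :
    applyWord (List.replicate (n - 1) (· + 1) ++ [b]) (m : ZMod n)
      = ((max (m - 1) 1 : ℕ) : ZMod n) := by
  rw [applyWord_replicate_pred_add_one_append]
  exact cerny_b_natCast_sub_one hb0 hb hm hmn

theorem iterate_natCast_eq_max {f : ZMod n → ZMod n}
    (hf : ∀ m : ℕ, 1 ≤ m → m < n → f m = ((max (m - 1) 1 : ℕ) : ZMod n))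
    (k : ℕ) {m : ℕ} (hm : 1 ≤ m) (hmn : m < n) :
    f^[k] m = ((max (m - k) 1 : ℕ) : ZMod n) := by
  induction k with
  | zero => rw [Function.iterate_zero_apply, Nat.sub_zero, max_eq_left hm]
  | succ k ih =>
    rw [Function.iterate_succ_apply', ih, hf _ (le_max_right _ _) (by omega)]
    congr 2
    omega

end Cerny

/-- the Černý automaton with `n ≥ 2` states (symbol `a : i ↦ i+1`,
symbol `b : 0 ↦ 1`, fixing other states) is synchronized by `b (a^{n-1} b)^{n-2}`. -/
theorem cerny_word_synchronizes (n : ℕ) (hn : 2 ≤ n)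
    (a b : ZMod n → ZMod n)
    (ha : ∀ i, a i = i + 1)
    (hb0 : b 0 = 1) (hb : ∀ i : ZMod n, i ≠ 0 → b i = i) :
    ∃ q0 : ZMod n, ∀ q : ZMod n,
      applyWord ([b] ++ (List.replicate (n - 2) (List.replicate (n - 1) a ++ [b])).flatten) q
        = q0 := by
  obtain rfl : a = (· + 1) := funext ha
  have : Fact (1 < n) := ⟨hn⟩
  refine ⟨1, fun q => ?_⟩
  have hm : 1 ≤ (b q).val :=
    Nat.one_le_iff_ne_zero.mpr ((ZMod.val_ne_zero _).mpr (cerny_b_ne_zero hb0 hb q))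
  have hmn : (b q).val < n := ZMod.val_lt _
  rw [applyWord_append, applyWord_singleton, applyWord_flatten_replicate,
    ← ZMod.natCast_zmod_val (b q),
    iterate_natCast_eq_max (fun _ => cerny_block_natCast hb0 hb) _ hm hmn,
    max_eq_right (by omega), Nat.cast_one]
end

section
/- The Černý automaton with n ≥ 2 states has no synchronizing word of length less than (n−1)^2. -/
/-
Along the run of a word from a state `q`, every `a` advances the state by one, and a `b` advances
it exactly when it is read in state `0`; call these readings the hits `h q`. The run ends in
`q + #a + h q`, so if the word is synchronizing then `q + h q` is constant modulo `n`, the `n`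
numbers `h q` are distinct, and some `h q ≥ n - 1`. Between two hits the run has to return from
`1` to `0`, which costs `n - 1` letters `a`; hence `(n - 1) * h q ≤ #a + (n - 1)`, and with
`h q ≤ #b` this gives `(n - 1)^2 ≤ #a + #b`.
-/

theorem Fintype.exists_card_le_succ_of_injective {α : Type*} [Fintype α] [Nonempty α]
    {f : α → ℕ} (hf : Function.Injective f) : ∃ x, Fintype.card α ≤ f x + 1 := by
  by_contra! hsmall
  have hinj : Function.Injective
      fun x => (⟨f x, by have := hsmall x; omega⟩ : Fin (card α - 1)) :=
    fun x y hxy => hf (congrArg Fin.val hxy)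
  have := Fintype.card_le_of_injective _ hinj
  rw [Fintype.card_fin] at this
  have := Fintype.card_pos (α := α)
  omega

namespace Cerny

def letter (n : ℕ) : Bool → ZMod n → ZMod n
  | false, q => q + 1
  | true, q => if q = 0 then 1 else q

def hits (n : ℕ) : List Bool → ZMod n → ℕ
  | [], _ => 0
  | x :: l, q => (if x ∧ q = 0 then 1 else 0) + hits n l (letter n x q)

theorem exists_map_letter_eq {n : ℕ} {a b : ZMod n → ZMod n} (ha : ∀ i, a i = i + 1)
    (hb0 : b 0 = 1) (hb : ∀ i : ZMod n, i ≠ 0 → b i = i) {w : List (ZMod n → ZMod n)}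
    (hw : ∀ f ∈ w, f = a ∨ f = b) : ∃ l : List Bool, l.map (letter n) = w := by
  have ha' : letter n false = a := funext fun i => (ha i).symm
  have hb' : letter n true = b := funext fun i => by
    by_cases hi : i = 0
    · simp [letter, hi, hb0]
    · simp [letter, hi, hb i hi]
  rw [← Set.mem_range, Set.range_list_map]
  intro f hf
  rcases hw f hf with rfl | rfl
  exacts [⟨false, ha'⟩, ⟨true, hb'⟩]

@[simp]
theorem hits_cons_false (n : ℕ) (l : List Bool) (q : ZMod n) :
    hits n (false :: l) q = hits n l (q + 1) := by
  simp [hits, letter]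

@[simp]
theorem hits_cons_true_zero (n : ℕ) (l : List Bool) :
    hits n (true :: l) 0 = hits n l 1 + 1 := by
  simp [hits, letter, add_comm]

@[simp]
theorem hits_cons_true_of_ne_zero (n : ℕ) (l : List Bool) {q : ZMod n} (hq : q ≠ 0) :
    hits n (true :: l) q = hits n l q := by
  simp [hits, letter, hq]

theorem applyWord_map_letter (n : ℕ) (l : List Bool) (q : ZMod n) :
    applyWord (l.map (letter n)) q = q + ((l.count false + hits n l q : ℕ) : ZMod n) := by
  induction l generalizing q with
  | nil => simp [applyWord, hits]
  | cons x l ih =>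
    change applyWord (l.map (letter n)) (letter n x q) = _
    rw [ih]
    rcases x with _ | _
    · simp only [letter, hits_cons_false, List.count_cons_self]
      push_cast
      ring
    · by_cases hq : q = 0
      · subst hq
        simp only [letter, if_true, hits_cons_true_zero,
          List.count_cons_of_ne (by decide : true ≠ false)]
        push_cast
        ring
      · simp [letter, hq]

theorem hits_le_count_true (n : ℕ) (l : List Bool) (q : ZMod n) :
    hits n l q ≤ l.count true := by
  induction l generalizing q with
  | nil => simp [hits]
  | cons x l ih =>
    rcases x with _ | _
    · rw [hits_cons_false, List.count_cons_of_ne (by decide)]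
      exact ih (q + 1)
    · rw [List.count_cons_self]
      by_cases hq : q = 0
      · rw [hq, hits_cons_true_zero]
        exact Nat.succ_le_succ (ih 1)
      · rw [hits_cons_true_of_ne_zero _ _ hq]
        exact (ih q).trans (Nat.le_succ _)

/-- `(-q).val` is the number of letters `a` needed to get from `q` to `0`. -/
theorem val_neg_add_hits_mul_le (m : ℕ) (l : List Bool) (q : ZMod (m + 1)) :
    (-q).val + hits (m + 1) l q * m ≤ l.count false + m := by
  induction l generalizing q with
  | nil =>
    have := ZMod.val_lt (-q)
    simp only [hits, List.count_nil]
    omega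
  | cons x l ih =>
    rcases x with _ | _
    · have hstep : (-q).val ≤ (-(q + 1)).val + 1 :=
        calc (-q).val = (-(q + 1) + 1).val := by rw [neg_add, neg_add_cancel_right]
          _ ≤ (-(q + 1)).val + (1 : ZMod (m + 1)).val := ZMod.val_add_le _ _
          _ ≤ (-(q + 1)).val + 1 := by
            rw [ZMod.val_one_eq_one_mod]; gcongr; exact Nat.mod_le _ _
      have := ih (q + 1)
      rw [hits_cons_false, List.count_cons_self]
      omega
    · have hcount : (true :: l).count false = l.count false :=
        List.count_cons_of_ne (by decide)
      by_cases hq : q = 0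
      · have := ih 1
        rw [ZMod.val_neg_one] at this
        rw [hq, hits_cons_true_zero, hcount, neg_zero, ZMod.val_zero]
        linarith
      · have := ih q
        rw [hits_cons_true_of_ne_zero _ _ hq, hcount]
        omega

theorem hits_injective_of_synchronizing {n : ℕ} {l : List Bool}
    (hsync : ∃ q0 : ZMod n, ∀ q, applyWord (l.map (letter n)) q = q0) :
    Function.Injective (hits n l) := by
  obtain ⟨q0, hq0⟩ := hsync
  intro q q' hqq'
  have h := (hq0 q).trans (hq0 q').symm
  rw [applyWord_map_letter, applyWord_map_letter, hqq'] at h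
  exact add_right_cancel h

end Cerny

theorem cerny_no_short_synchronizing_word_general (n : ℕ)
    (a b : ZMod n → ZMod n)
    (ha : ∀ i, a i = i + 1)
    (hb0 : b 0 = 1) (hb : ∀ i : ZMod n, i ≠ 0 → b i = i)
    (w : List (ZMod n → ZMod n)) (hw : ∀ f ∈ w, f = a ∨ f = b)
    (hsync : ∃ q0 : ZMod n, ∀ q : ZMod n, applyWord w q = q0) :
    (n - 1) ^ 2 ≤ w.length := by
  obtain ⟨l, rfl⟩ := Cerny.exists_map_letter_eq ha hb0 hb hw
  obtain _ | m := n
  · simp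
  obtain ⟨q, hq⟩ :=
    Fintype.exists_card_le_succ_of_injective (Cerny.hits_injective_of_synchronizing hsync)
  rw [ZMod.card] at hq
  have hbound := Cerny.val_neg_add_hits_mul_le m l q
  have hhits := Cerny.hits_le_count_true (m + 1) l q
  calc (m + 1 - 1) ^ 2 = m * m := by rw [Nat.add_sub_cancel, sq]
    _ ≤ Cerny.hits (m + 1) l q * m := Nat.mul_le_mul_right _ (by omega)
    _ ≤ l.count false + l.count true := by omega
    _ = (l.map (Cerny.letter (m + 1))).length := by
      rw [List.count_false_add_count_true, List.length_map]

/-- the Černý automaton with `n ≥ 2` states has no synchronizing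
word of length less than `(n-1)^2`. -/
theorem cerny_no_short_synchronizing_word (n : ℕ) (hn : 2 ≤ n)
    (a b : ZMod n → ZMod n)
    (ha : ∀ i, a i = i + 1)
    (hb0 : b 0 = 1) (hb : ∀ i : ZMod n, i ≠ 0 → b i = i)
    (w : List (ZMod n → ZMod n)) (hw : ∀ f ∈ w, f = a ∨ f = b)
    (hsync : ∃ q0 : ZMod n, ∀ q : ZMod n, applyWord w q = q0) :
    (n - 1) ^ 2 ≤ w.length :=
  cerny_no_short_synchronizing_word_general n a b ha hb0 hb w hw hsync
end

section
/- Let Q be a set of n states and k ≥ 2. Suppose (S₁,P₁),…,(S_ℓ,P_ℓ) is a Frankl–Pin sequence: the Sᵢ are distinct k-subsets of Q, the Pᵢ are distinct 2-subsets of Q, Pᵢ ⊆ Sᵢ for all i, and Pⱼ ⊄ Sᵢ whenever j < i. Then ℓ ≤ C(n−k+2, 2). -/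
/-!
Number `Q` injectively into `ℚ` and put `gᵢ = ∏_{b ∉ Sᵢ} (X - b)`, of degree `n - k`. By the
Binet–Cauchy identity, the `2 × 2` minors of the coefficient rows of `X * gᵢ` and `gᵢ` pair with
the minors of the moment rows `(x ^ a)_a`, `(y ^ a)_a` of `Pⱼ = {x, y}` to give
`(x - y) gᵢ(x) gᵢ(y)`, which vanishes when `Pⱼ ⊄ Sᵢ` but not when `j = i`. So the `ℓ × ℓ` matrix
of these pairings is upper triangular with nonzero diagonal, while it factors through the
`C(n - k + 2, 2)` minors.
-/

open Finset Polynomial Matrix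

section BinetCauchy

variable {R : Type*} [CommRing R]

theorem Finset.sum_mul_sum_sub_sum_mul_sum_eq_sum_range_sum_range (N : ℕ) (u w v z : ℕ → R) :
    (∑ a ∈ range N, u a * v a) * (∑ b ∈ range N, w b * z b)
        - (∑ a ∈ range N, w a * v a) * (∑ b ∈ range N, u b * z b)
      = ∑ a ∈ range N, ∑ b ∈ range a, (u a * w b - u b * w a) * (v a * z b - v b * z a) := by
  induction N with
  | zero => simp
  | succ N ih =>
    have hnew : ∑ b ∈ range N, (u N * w b - u b * w N) * (v N * z b - v b * z N)
        = u N * v N * ∑ b ∈ range N, w b * z b - u N * z N * ∑ b ∈ range N, w b * v b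
          - w N * v N * ∑ b ∈ range N, u b * z b + w N * z N * ∑ b ∈ range N, u b * v b := by
      simp only [mul_sum, ← sum_sub_distrib, ← sum_add_distrib]
      exact sum_congr rfl fun b _ => by ring
    rw [sum_range_succ (fun a => ∑ b ∈ range a, _), ← ih, hnew]
    simp only [sum_range_succ]
    ring

/-- The pairs `b < a < N`. -/
abbrev PluckerIndex (N : ℕ) : Type := Σ a : Fin N, Fin a

/-- The `2 × 2` minors of the `2 × N` matrix with rows `u` and `w`. -/
def pluckerCoord (N : ℕ) (u w : ℕ → R) : PluckerIndex N → R :=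
  fun p => u p.1 * w p.2 - u p.2 * w p.1

theorem pluckerCoord_dotProduct (N : ℕ) (u w v z : ℕ → R) :
    pluckerCoord N u w ⬝ᵥ pluckerCoord N v z
      = (∑ a ∈ range N, u a * v a) * (∑ b ∈ range N, w b * z b)
        - (∑ a ∈ range N, w a * v a) * (∑ b ∈ range N, u b * z b) := by
  rw [sum_mul_sum_sub_sum_mul_sum_eq_sum_range_sum_range, dotProduct, ← univ_sigma_univ,
    sum_sigma, ← Fin.sum_univ_eq_sum_range]
  refine sum_congr rfl fun a _ => ?_
  rw [← Fin.sum_univ_eq_sum_range]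
  rfl

theorem card_pluckerIndex (N : ℕ) : Fintype.card (PluckerIndex N) = N.choose 2 := by
  simp only [Fintype.card_sigma, Fintype.card_fin]
  rw [Fin.sum_univ_eq_sum_range (fun a => a) N, sum_range_id, Nat.choose_two_right]

theorem Polynomial.eval_mul_eval_sub_eval_mul_eval {f g : R[X]} {N : ℕ}
    (hf : f.natDegree < N) (hg : g.natDegree < N) (x y : R) :
    f.eval x * g.eval y - g.eval x * f.eval y
      = pluckerCoord N f.coeff g.coeff ⬝ᵥ pluckerCoord N (x ^ ·) (y ^ ·) := by
  rw [pluckerCoord_dotProduct, eval_eq_sum_range' hf, eval_eq_sum_range' hg,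
    eval_eq_sum_range' hf, eval_eq_sum_range' hg]

theorem Polynomial.pluckerCoord_X_mul_dotProduct {g : R[X]} {N : ℕ} (hg : g.natDegree + 2 ≤ N)
    (x y : R) :
    pluckerCoord N (X * g).coeff g.coeff ⬝ᵥ pluckerCoord N (x ^ ·) (y ^ ·)
      = (x - y) * g.eval x * g.eval y := by
  rw [← eval_mul_eval_sub_eval_mul_eval (by grw [natDegree_mul_le, natDegree_X_le]; omega)
    (by omega)]
  simp only [eval_mul, eval_X]
  ring

end BinetCauchy

theorem Matrix.card_le_of_dotProduct_triangular {m ι K : Type*} [Fintype m] [LinearOrder m]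
    [Fintype ι] [Field K] (a b : m → ι → K) (htri : ∀ i j, j < i → a i ⬝ᵥ b j = 0)
    (hdiag : ∀ i, a i ⬝ᵥ b i ≠ 0) : Fintype.card m ≤ Fintype.card ι := by
  set M : Matrix m m K := of a * (of b)ᵀ
  have hM : ∀ i j, M i j = a i ⬝ᵥ b j := fun i j => by simp [M, mul_apply, dotProduct]
  have hdet : IsUnit M.det := by
    rw [det_of_isUpperTriangular fun i j hij => (hM i j).trans (htri i j hij)]
    exact (prod_ne_zero_iff.mpr fun i _ => (hM i i).symm ▸ hdiag i).isUnit
  calc Fintype.card m = M.rank := (rank_of_isUnit M ((isUnit_iff_isUnit_det M).mpr hdet)).symm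
    _ ≤ (of a).rank := rank_mul_le_left _ _
    _ ≤ Fintype.card ι := rank_le_card_width _

theorem Polynomial.eval_prod_X_sub_C_eq_zero_iff {α K : Type*} [CommRing K] [IsDomain K]
    {t : α → K} (ht : Function.Injective t) (s : Finset α) (q : α) :
    (∏ b ∈ s, (X - C (t b))).eval (t q) = 0 ↔ q ∈ s := by
  simp [eval_prod, prod_eq_zero_iff, sub_eq_zero, ht.eq_iff]

theorem frankl_pin_bound_general {Q : Type*} [Fintype Q]
    (n k ℓ : ℕ) (hcard : Fintype.card Q = n)
    (S P : Fin ℓ → Finset Q)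
    (hScard : ∀ i, (S i).card = k) (hPcard : ∀ i, (P i).card = 2)
    (hPS : ∀ i, P i ⊆ S i)
    (hFP : ∀ i j : Fin ℓ, j < i → ¬ P j ⊆ S i) :
    ℓ ≤ (n - k + 2).choose 2 := by
  classical
  let t : Q → ℚ := fun q => (Fintype.equivFin Q q : ℚ)
  have ht : Function.Injective t :=
    Nat.cast_injective.comp (Fin.val_injective.comp (Fintype.equivFin Q).injective)
  choose x y hxy hPxy using fun j => card_eq_two.mp (hPcard j)
  let g i : ℚ[X] := ∏ b ∈ (S i)ᶜ, (X - C (t b))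
  have hg_natDegree i : (g i).natDegree + 2 ≤ n - k + 2 := by
    rw [natDegree_finsetProd_X_sub_C_eq_card, card_compl, hScard, hcard]
  have hg_eval i q : (g i).eval (t q) = 0 ↔ q ∉ S i := by
    rw [eval_prod_X_sub_C_eq_zero_iff ht, mem_compl]
  have hcard_le := card_le_of_dotProduct_triangular
    (fun i => pluckerCoord (n - k + 2) (X * g i).coeff (g i).coeff)
    (fun j => pluckerCoord (n - k + 2) (t (x j) ^ ·) (t (y j) ^ ·))
    (fun i j hij => ?_) (fun i => ?_)
  · rwa [Fintype.card_fin, card_pluckerIndex] at hcard_le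
  · have hout := hFP i j hij
    simp only [hPxy, insert_subset_iff, singleton_subset_iff, not_and_or, ← hg_eval] at hout
    simp only [pluckerCoord_X_mul_dotProduct (hg_natDegree i), mul_eq_zero]
    tauto
  · have hin := hPS i
    simp only [hPxy, insert_subset_iff, singleton_subset_iff] at hin
    simp only [pluckerCoord_X_mul_dotProduct (hg_natDegree i), mul_ne_zero_iff, sub_ne_zero,
      ht.ne_iff, ne_eq, hg_eval, not_not]
    exact ⟨⟨hxy i, hin.1⟩, hin.2⟩

/-- a Frankl–Pin sequence of `k`-subsets and pairs of an `n`-set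
has length at most `C(n-k+2, 2)`. -/
theorem frankl_pin_bound {Q : Type*} [Fintype Q] [DecidableEq Q]
    (n k ℓ : ℕ) (hcard : Fintype.card Q = n) (hk2 : 2 ≤ k) (hkn : k ≤ n)
    (S P : Fin ℓ → Finset Q)
    (hSinj : Function.Injective S) (hPinj : Function.Injective P)
    (hScard : ∀ i, (S i).card = k) (hPcard : ∀ i, (P i).card = 2)
    (hPS : ∀ i, P i ⊆ S i)
    (hFP : ∀ i j : Fin ℓ, j < i → ¬ P j ⊆ S i) :
    ℓ ≤ (n - k + 2).choose 2 :=
  frankl_pin_bound_general n k ℓ hcard S P hScard hPcard hPS hFP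
end

section
/- In a synchronizing DFA with n states, if some subset R ⊆ Q of size m is reachable from Q (i.e. R = Q·w for some word w) and every state of R can be reached from any state (within R-synchronization), then the number of steps needed to reduce Q to a subset of size m is at least 1 + 2 + ⋯ + (n−m) = (n−m+1)(n−m)/2 in the worst case construction; formally: there exists a synchronizing DFA with n states, exactly m states reachable from every other state, and synchronization length exactly (m−1)² + (n−m+1)(n−m)/2, provided 1 ≤ m ≤ n−1 and the Černý bound (m−1)² is attainable on m states (e.g. via the Černý automaton). -/
/-!
The automaton is the Černý automaton on a core `ZMod m` (letter `a` rotates, letter `b` merges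
`0` into `1`) with a path of `n - m` tail states hanging off the core state `0`: tail letter `0`
pushes the end of the path into the core and tail letter `j > 0` swaps tail states `j - 1` and
`j`. The core is closed and strongly connected, so it is exactly the set of states reachable
from everywhere.

A synchronizing word pushes the tail states into the core one at a time, using
`1 + 2 + ⋯ + (n - m)` tail letters, and then applies Černý's word `b (a^(m-1) b)^(m-2)`.
Conversely, the core letters of a synchronizing word synchronize the Černý automaton, which
takes `(m - 1)^2` letters: the set of states that a word `u` sends to a fixed state is always a
cyclic arc `{x, …, x + s - 1}` with `s * m + (-x) < |u| + 2 * m`, as every letter raises the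
left side by at most one. The tail letters number at least `1 + 2 + ⋯ + (n - m)`, because each
of them lowers the total distance to the core of the image of the state set by at most one.
-/

/-- Action of a word over an alphabet `σ` acting on states `Q`. -/
def wordAct {Q σ : Type*} (act : σ → Q → Q) (w : List σ) (q : Q) : Q :=
  w.foldl (fun q x => act x q) q

open Finset

section WordAct

variable {Q Q' σ : Type*} (act : σ → Q → Q)

@[simp]
theorem wordAct_nil (q : Q) : wordAct act [] q = q := rfl

@[simp]
theorem wordAct_cons (x : σ) (w : List σ) (q : Q) :
    wordAct act (x :: w) q = wordAct act w (act x q) := rfl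

@[simp]
theorem wordAct_append (u v : List σ) (q : Q) :
    wordAct act (u ++ v) q = wordAct act v (wordAct act u q) :=
  List.foldl_append

def IsSyncWord (w : List σ) : Prop := ∃ q₀, ∀ q, wordAct act w q = q₀

def reachableFromAll : Set Q := {q | ∀ p, ∃ w, wordAct act w p = q}

theorem wordAct_conj (e : Q ≃ Q') (w : List σ) (q : Q') :
    wordAct (fun x => e.conj (act x)) w q = e (wordAct act w (e.symm q)) := by
  induction w generalizing q with
  | nil => simp
  | cons x w ih => simp [ih]

theorem isSyncWord_conj_iff (e : Q ≃ Q') (w : List σ) :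
    IsSyncWord (fun x => e.conj (act x)) w ↔ IsSyncWord act w := by
  simp only [IsSyncWord, wordAct_conj]
  constructor
  · rintro ⟨q₀, h⟩
    exact ⟨e.symm q₀, fun q => by simpa using congrArg e.symm (h (e q))⟩
  · rintro ⟨q₀, h⟩
    exact ⟨e q₀, fun q => by rw [h]⟩

theorem reachableFromAll_conj (e : Q ≃ Q') :
    reachableFromAll (fun x => e.conj (act x)) = e '' reachableFromAll act := by
  ext q
  simp only [reachableFromAll, wordAct_conj, Set.mem_ofPred_eq, Set.mem_image]
  constructor
  · intro h
    refine ⟨e.symm q, fun p => ?_, by simp⟩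
    obtain ⟨w, hw⟩ := h (e p)
    exact ⟨w, by simpa using congrArg e.symm hw⟩
  · rintro ⟨q, h, rfl⟩ p
    obtain ⟨w, hw⟩ := h (e.symm p)
    exact ⟨w, by rw [hw]⟩

theorem le_potential_image_wordAct_add_countP [DecidableEq Q] (Φ : Finset Q → ℕ) (p : σ → Bool)
    (h : ∀ x S, Φ S ≤ Φ (S.image (act x)) + if p x then 1 else 0) (w : List σ) (S : Finset Q) :
    Φ S ≤ Φ (S.image (wordAct act w)) + w.countP p := by
  induction w generalizing S with
  | nil => simp [show wordAct act [] = id from rfl]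
  | cons x w ih =>
    have hw := ih (S.image (act x))
    rw [image_image, show wordAct act w ∘ act x = wordAct act (x :: w) from rfl] at hw
    have hx := h x S
    rw [List.countP_cons]
    split_ifs at hx ⊢ <;> omega

end WordAct

theorem sum_le_sum_image_of_forall_mem_eq {Q : Type*} [DecidableEq Q] {wt : Q → ℕ} {f : Q → Q}
    {S : Finset Q} (h : ∀ q ∈ S, wt q ≠ 0 → f q = q) :
    ∑ q ∈ S, wt q ≤ ∑ q ∈ S.image f, wt q := by
  rw [← sum_filter_ne_zero]
  refine sum_le_sum_of_subset fun q hq => ?_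
  rw [mem_filter] at hq
  exact mem_image.2 ⟨q, hq.1, h q hq.1 hq.2⟩

theorem ZMod.val_add_one_cases {m : ℕ} [NeZero m] (y : ZMod m) :
    (y + 1).val = y.val + 1 ∨ ((y + 1).val = 0 ∧ y.val + 1 = m) := by
  have hy : y + 1 = ((y.val + 1 : ℕ) : ZMod m) := by rw [Nat.cast_succ, ZMod.natCast_zmod_val]
  rcases Nat.lt_or_eq_of_le (ZMod.val_lt y) with h | h
  · exact .inl (by rw [hy, ZMod.val_cast_of_lt h])
  · exact .inr ⟨by rw [hy, ← Nat.succ_eq_add_one, h, ZMod.natCast_self, ZMod.val_zero], h⟩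

section Cerny

variable {m : ℕ}

/-- The Černý automaton: `true` is the rotation `a`, `false` the letter `b` merging `0` into `1`. -/
def cerny (m : ℕ) : Bool → ZMod m → ZMod m
  | true, z => z + 1
  | false, z => if z = 0 then 1 else z

def cernyWord : ℕ → List Bool
  | m + 2 => false :: (List.replicate m (List.replicate (m + 1) true ++ [false])).flatten
  | _ => []

theorem length_cernyWord (m : ℕ) : (cernyWord m).length = (m - 1) ^ 2 := by
  match m with
  | 0 | 1 => rfl
  | m + 2 =>
    simp only [cernyWord, List.length_cons, List.length_flatten, List.map_replicate,
      List.length_append, List.length_replicate, List.length_nil, zero_add, List.sum_replicate,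
      smul_eq_mul, Nat.add_one_sub_one]
    ring

theorem wordAct_cerny_replicate_true (r : ℕ) (z : ZMod m) :
    wordAct (cerny m) (List.replicate r true) z = z + r := by
  induction r generalizing z with
  | zero => simp
  | succ r ih =>
    simp only [List.replicate_succ, wordAct_cons, cerny, ih, Nat.cast_succ]
    ring

theorem wordAct_cerny_round {p i : ℕ} (hi : i < p + 1) :
    wordAct (cerny (p + 2)) (List.replicate (p + 1) true ++ [false]) ((i + 1 : ℕ) : ZMod (p + 2))
      = ((i - 1 + 1 : ℕ) : ZMod (p + 2)) := by
  have hrot : ((i + 1 : ℕ) : ZMod (p + 2)) + ((p + 1 : ℕ) : ZMod (p + 2)) = (i : ℕ) := by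
    have := ZMod.natCast_self (p + 2)
    push_cast at this ⊢
    linear_combination this
  rw [wordAct_append, wordAct_cerny_replicate_true, hrot]
  rcases i with _ | i
  · simp [cerny]
  · have hne : ((i + 1 : ℕ) : ZMod (p + 2)) ≠ 0 := by
      rw [Ne, ZMod.natCast_eq_zero_iff]
      exact Nat.not_dvd_of_pos_of_lt (by omega) (by omega)
    simp only [wordAct_cons, wordAct_nil, cerny, if_neg hne, Nat.add_sub_cancel]

theorem wordAct_cerny_rounds {p j : ℕ} (hj : j < p + 1) (t : ℕ) :
    wordAct (cerny (p + 2)) (List.replicate t (List.replicate (p + 1) true ++ [false])).flatten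
      ((j + 1 : ℕ) : ZMod (p + 2)) = ((j - t + 1 : ℕ) : ZMod (p + 2)) := by
  induction t with
  | zero => simp
  | succ t ih =>
    rw [List.replicate_succ', List.flatten_append, wordAct_append, ih, List.flatten_singleton,
      wordAct_cerny_round (by omega), Nat.sub_sub]

theorem isSyncWord_cernyWord (m : ℕ) [NeZero m] : IsSyncWord (cerny m) (cernyWord m) := by
  rcases m with _ | _ | p
  · exact absurd rfl (NeZero.ne 0)
  · exact ⟨0, fun _ => Subsingleton.elim (α := ZMod 1) _ _⟩
  · have : Fact (1 < p + 2) := ⟨by omega⟩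
    refine ⟨1, fun z => ?_⟩
    rw [cernyWord, wordAct_cons]
    set y := cerny (p + 2) false z
    have hy : y ≠ 0 := by
      by_cases hz : z = 0 <;> simp [y, cerny, hz]
    have hyv : y = ((y.val - 1 + 1 : ℕ) : ZMod (p + 2)) := by
      rw [Nat.sub_add_cancel (Nat.pos_of_ne_zero ((ZMod.val_ne_zero y).2 hy)),
        ZMod.natCast_zmod_val]
    have hlt : y.val - 1 < p + 1 := by have := ZMod.val_lt y; omega
    rw [hyv, wordAct_cerny_rounds hlt]
    simp [Nat.sub_eq_zero_of_le (by omega : y.val - 1 ≤ p)]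

end Cerny

section CernyLowerBound

variable {m : ℕ}

/-- The arc `{x, x + 1, …, x + s - 1}` of the cycle `ZMod m` (all of it once `s ≥ m`). -/
def cyclicInterval (x : ZMod m) (s : ℕ) : Set (ZMod m) := {z | (z - x).val < s}

theorem preimage_cerny_true (x : ZMod m) (s : ℕ) :
    cerny m true ⁻¹' cyclicInterval x s = cyclicInterval (x - 1) s := by
  ext z
  simp [cerny, cyclicInterval, show z + 1 - x = z - (x - 1) by ring]

theorem preimage_cerny_false_of_mem_iff {P : Set (ZMod m)} (h : (0 : ZMod m) ∈ P ↔ 1 ∈ P) :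
    cerny m false ⁻¹' P = P := by
  ext z
  by_cases hz : z = 0
  · subst hz; simpa [cerny] using h.symm
  · simp [cerny, hz]

variable [NeZero m]

theorem preimage_cerny_false_of_zero_notMem {x : ZMod m} {s : ℕ}
    (h0 : (0 : ZMod m) ∉ cyclicInterval x s) (h1 : (1 : ZMod m) ∈ cyclicInterval x s) :
    (-x).val + 1 = m ∧ x = 1 ∧ cerny m false ⁻¹' cyclicInterval x s = cyclicInterval 0 (s + 1) := by
  simp only [cyclicInterval, Set.mem_ofPred_eq, zero_sub, not_lt,
    show (1 : ZMod m) - x = -x + 1 by ring] at h0 h1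
  obtain ⟨hx, hxm⟩ : (-x + 1).val = 0 ∧ (-x).val + 1 = m := by
    rcases ZMod.val_add_one_cases (-x) with h | h
    · omega
    · exact h
  have hx1 : x = 1 := by
    rw [ZMod.val_eq_zero] at hx
    linear_combination -hx
  refine ⟨hxm, hx1, ?_⟩
  subst hx1
  ext z
  by_cases hz : z = 0
  · subst hz
    exact iff_of_true (by simpa [cerny, cyclicInterval] using h1) (by simp [cyclicInterval])
  · rcases ZMod.val_add_one_cases (z - 1) with h | h <;>
      simp only [sub_add_cancel] at h
    · simp [cerny, cyclicInterval, hz, h]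
    · exact absurd ((ZMod.val_eq_zero z).1 h.1) hz

theorem preimage_cerny_false_of_one_notMem {x : ZMod m} {s : ℕ}
    (h0 : (0 : ZMod m) ∈ cyclicInterval x s) (h1 : (1 : ZMod m) ∉ cyclicInterval x s) :
    (-x).val + 1 = s ∧ cerny m false ⁻¹' cyclicInterval x s = cyclicInterval x (s - 1) := by
  have hd0 : (-x).val < s := by simpa [cyclicInterval] using h0
  have hd1 : s ≤ (-x + 1).val := by
    simpa [cyclicInterval, show (1 : ZMod m) - x = -x + 1 by ring] using h1
  have hs : (-x).val + 1 = s := by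
    rcases ZMod.val_add_one_cases (-x) with h | h <;> omega
  refine ⟨hs, ?_⟩
  ext z
  by_cases hz : z = 0
  · subst hz
    simp only [Set.mem_preimage, cerny]
    exact iff_of_false h1 (by simp only [cyclicInterval, Set.mem_ofPred_eq, zero_sub]; omega)
  · have hzx : (z - x).val ≠ (-x).val := by
      rwa [Ne, (ZMod.val_injective m).eq_iff, sub_eq_neg_self]
    simp only [cerny, cyclicInterval, Set.mem_preimage, Set.mem_ofPred_eq, if_neg hz]
    omega

theorem exists_preimage_cerny_cyclicInterval (c : Bool) (x : ZMod m) (s : ℕ) :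
    ∃ x' s', cerny m c ⁻¹' cyclicInterval x s = cyclicInterval x' s' ∧
      s' * m + (-x').val ≤ s * m + (-x).val + 1 := by
  cases c with
  | true =>
    refine ⟨x - 1, s, preimage_cerny_true x s, ?_⟩
    rw [neg_sub', sub_neg_eq_add]
    rcases ZMod.val_add_one_cases (-x) with h | h <;> omega
  | false =>
    by_cases h0 : (0 : ZMod m) ∈ cyclicInterval x s <;>
      by_cases h1 : (1 : ZMod m) ∈ cyclicInterval x s
    · exact ⟨x, s, preimage_cerny_false_of_mem_iff (iff_of_true h0 h1), by omega⟩
    · obtain ⟨hs, hpre⟩ := preimage_cerny_false_of_one_notMem h0 h1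
      refine ⟨x, s - 1, hpre, ?_⟩
      have : (s - 1) * m ≤ s * m := Nat.mul_le_mul_right _ (Nat.sub_le _ _)
      omega
    · obtain ⟨hm, rfl, hpre⟩ := preimage_cerny_false_of_zero_notMem h0 h1
      refine ⟨0, s + 1, hpre, ?_⟩
      rw [Nat.succ_mul, neg_zero, ZMod.val_zero]
      omega
    · exact ⟨x, s, preimage_cerny_false_of_mem_iff (iff_of_false h0 h1), by omega⟩

theorem exists_cyclicInterval_eq_fiber (z₀ : ZMod m) (u : List Bool) :
    ∃ x s, {z | wordAct (cerny m) u z = z₀} = cyclicInterval x s ∧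
      s * m + (-x).val < u.length + 2 * m := by
  induction u with
  | nil =>
    refine ⟨z₀, 1, ?_, by have := ZMod.val_lt (-z₀); rw [List.length_nil]; omega⟩
    ext z
    simp [cyclicInterval, ZMod.val_eq_zero, sub_eq_zero]
  | cons c u ih =>
    obtain ⟨x, s, hfib, hpot⟩ := ih
    obtain ⟨x', s', hpre, hpot'⟩ := exists_preimage_cerny_cyclicInterval c x s
    refine ⟨x', s', ?_, by simp only [List.length_cons]; omega⟩
    rw [← hpre, ← hfib]
    rfl

theorem sq_le_length_of_isSyncWord_cerny {u : List Bool} (hu : IsSyncWord (cerny m) u) :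
    (m - 1) ^ 2 ≤ u.length := by
  obtain ⟨z₀, hz₀⟩ := hu
  obtain ⟨x, s, hfib, hpot⟩ := exists_cyclicInterval_eq_fiber z₀ u
  have hmem : x - 1 ∈ cyclicInterval x s := hfib ▸ hz₀ (x - 1)
  have hs : m ≤ s := by
    simp only [cyclicInterval, Set.mem_ofPred_eq, sub_sub_cancel_left] at hmem
    rcases ZMod.val_add_one_cases (-1 : ZMod m) with h | h
    · simp at h
    · omega
  obtain ⟨p, rfl⟩ : ∃ p, m = p + 1 := Nat.exists_eq_add_one.2 (Nat.pos_of_ne_zero (NeZero.ne m))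
  rw [Nat.add_sub_cancel]
  nlinarith [Nat.mul_le_mul_right (p + 1) hs]

end CernyLowerBound

section CernyWithTail

variable (m k : ℕ)

/-- Tail letter `0` moves tail state `0` into the core at `0`; tail letter `j ≠ 0` swaps tail
states `j - 1` and `j`. -/
def tailStep (j t : Fin k) : ZMod m ⊕ Fin k :=
  if (j : ℕ) = 0 then (if t = j then .inl 0 else .inr t)
  else .inr (Equiv.swap ⟨j - 1, by omega⟩ j t)

def cernyWithTail : Bool ⊕ Fin k → ZMod m ⊕ Fin k → ZMod m ⊕ Fin k
  | .inl c, .inl z => .inl (cerny m c z)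
  | .inl _, .inr t => .inr t
  | .inr _, .inl z => .inl z
  | .inr j, .inr t => tailStep m k j t

variable {m k}

theorem wordAct_cernyWithTail_inl (w : List (Bool ⊕ Fin k)) (z : ZMod m) :
    wordAct (cernyWithTail m k) w (.inl z) =
      .inl (wordAct (cerny m) (w.filterMap Sum.getLeft?) z) := by
  induction w generalizing z with
  | nil => rfl
  | cons x w ih => cases x <;> simp [cernyWithTail, List.filterMap_cons, ih]

theorem wordAct_cernyWithTail_map_inr (v : List (Fin k)) (z : ZMod m) :
    wordAct (cernyWithTail m k) (v.map .inr) (.inl z) = .inl z := by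
  simp [wordAct_cernyWithTail_inl, List.filterMap_map, Function.comp_def]

theorem wordAct_cernyWithTail_map_inl (u : List Bool) (z : ZMod m) :
    wordAct (cernyWithTail m k) (u.map .inl) (.inl z) = .inl (wordAct (cerny m) u z) := by
  simp [wordAct_cernyWithTail_inl, List.filterMap_map, Function.comp_def]

end CernyWithTail

section SyncWord

variable {m k : ℕ}

def descend : (t : ℕ) → t < k → List (Fin k)
  | 0, h => [⟨0, h⟩]
  | t + 1, h => ⟨t + 1, h⟩ :: descend t (Nat.lt_of_succ_lt h)

def clearTail : (K : ℕ) → K ≤ k → List (Fin k)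
  | 0, _ => []
  | K + 1, h => clearTail K (Nat.le_of_succ_le h) ++ descend K h

theorem length_descend (t : ℕ) (h : t < k) : (descend t h).length = t + 1 := by
  induction t with
  | zero => rfl
  | succ t ih => simp [descend, ih]

theorem length_clearTail (K : ℕ) (h : K ≤ k) :
    (clearTail K h).length = ∑ i ∈ range (K + 1), i := by
  induction K with
  | zero => rfl
  | succ K ih => rw [clearTail, List.length_append, ih, length_descend, sum_range_succ _ (K + 1)]

theorem cernyWithTail_inr_inr_of_lt {j t : Fin k} (h : j < t) :
    cernyWithTail m k (.inr j) (.inr t) = .inr t := by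
  have htj : t ≠ j := Fin.ne_of_gt h
  simp only [cernyWithTail, tailStep, if_neg htj]
  split_ifs
  · rfl
  · rw [Equiv.swap_apply_of_ne_of_ne (Fin.ne_of_gt (Fin.lt_def.2 (by dsimp; omega))) htj]

theorem wordAct_descend_of_lt (t : ℕ) (h : t < k) {t' : Fin k} (ht : t < t') :
    wordAct (cernyWithTail m k) ((descend t h).map .inr) (.inr t') = .inr t' := by
  induction t with
  | zero => exact cernyWithTail_inr_inr_of_lt (j := ⟨0, h⟩) ht
  | succ t ih =>
    rw [descend, List.map_cons, wordAct_cons,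
      cernyWithTail_inr_inr_of_lt (j := ⟨t + 1, h⟩) ht, ih _ (by omega)]

theorem wordAct_descend_self (t : ℕ) (h : t < k) :
    wordAct (cernyWithTail m k) ((descend t h).map .inr) (.inr ⟨t, h⟩) = .inl 0 := by
  induction t with
  | zero => simp [descend, cernyWithTail, tailStep]
  | succ t ih => simpa [descend, cernyWithTail, tailStep] using ih (by omega)

theorem wordAct_clearTail (K : ℕ) (h : K ≤ k) (t : Fin k) :
    wordAct (cernyWithTail m k) ((clearTail K h).map .inr) (.inr t) =
      if (t : ℕ) < K then .inl 0 else .inr t := by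
  induction K with
  | zero => simp [clearTail]
  | succ K ih =>
    rw [clearTail, List.map_append, wordAct_append, ih (by omega)]
    rcases lt_trichotomy (t : ℕ) K with htK | htK | htK
    · simp [htK, Nat.lt_succ_of_lt htK, wordAct_cernyWithTail_map_inr]
    · obtain rfl : t = ⟨K, h⟩ := Fin.ext htK
      simp [wordAct_descend_self]
    · simp [Nat.not_lt.2 htK.le, show ¬ (t : ℕ) < K + 1 by omega, wordAct_descend_of_lt K h htK]

variable (m k)

def cernyWithTailSyncWord : List (Bool ⊕ Fin k) :=
  (clearTail k le_rfl).map .inr ++ (cernyWord m).map .inl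

theorem length_cernyWithTailSyncWord :
    (cernyWithTailSyncWord m k).length = (m - 1) ^ 2 + (k + 1) * k / 2 := by
  simp [cernyWithTailSyncWord, length_clearTail, length_cernyWord, sum_range_id, add_comm]

theorem isSyncWord_cernyWithTailSyncWord [NeZero m] :
    IsSyncWord (cernyWithTail m k) (cernyWithTailSyncWord m k) := by
  obtain ⟨z₁, hz₁⟩ := isSyncWord_cernyWord m
  refine ⟨.inl z₁, fun q => ?_⟩
  rcases q with z | t <;>
    simp [cernyWithTailSyncWord, wordAct_cernyWithTail_map_inr, wordAct_clearTail,
      wordAct_cernyWithTail_map_inl, hz₁]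

end SyncWord

section LowerBound

variable {m k : ℕ}

/-- Tail state `t` is `t + 1` tail letters away from the core. -/
def tailWeight : ZMod m ⊕ Fin k → ℕ := Sum.elim (fun _ => 0) (fun t => t + 1)

theorem cernyWithTail_inr_involutive {j : Fin k} (hj : (j : ℕ) ≠ 0) :
    Function.Involutive (cernyWithTail m k (.inr j)) := by
  rintro (z | t)
  · rfl
  · simp [cernyWithTail, tailStep, hj]

theorem sum_tailWeight_le_sum_image (x : Bool ⊕ Fin k) (S : Finset (ZMod m ⊕ Fin k)) :
    ∑ q ∈ S, tailWeight q ≤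
      ∑ q ∈ S.image (cernyWithTail m k x), tailWeight q + if x.isRight then 1 else 0 := by
  rcases x with c | j
  · refine sum_le_sum_image_of_forall_mem_eq fun q _ hq => ?_
    rcases q with z | t
    · exact absurd rfl hq
    · rfl
  by_cases hj : (j : ℕ) = 0
  · have hfix : ∀ q ∈ S.erase (.inr j), cernyWithTail m k (.inr j) q = q := by
      rintro (z | t) hq
      · rfl
      · have htj : t ≠ j := fun h => by simp [h] at hq
        simp [cernyWithTail, tailStep, htj, hj]
    calc ∑ q ∈ S, tailWeight q ≤ ∑ q ∈ S.erase (.inr j), tailWeight q + 1 := by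
          by_cases hS : .inr j ∈ S
          · rw [← sum_erase_add S _ hS]
            simp [tailWeight, hj]
          · rw [erase_eq_of_notMem hS]
            omega
      _ ≤ ∑ q ∈ (S.erase (.inr j)).image (cernyWithTail m k (.inr j)), tailWeight q + 1 := by
          grw [sum_le_sum_image_of_forall_mem_eq fun q hq _ => hfix q hq]
      _ ≤ _ := by
          grw [image_subset_image (erase_subset _ S)]
          simp
  · have hpoint : ∀ q, tailWeight q ≤
        tailWeight (cernyWithTail m k (.inr j) q) + if q = .inr j then 1 else 0 := by
      rintro (z | t)
      · simp [tailWeight, cernyWithTail]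
      · simp only [cernyWithTail, tailStep, if_neg hj, tailWeight, Sum.elim_inr, Sum.inr.injEq,
          Equiv.swap_apply_def]
        split_ifs <;> rename_i h₁ h₂ <;> simp only [Fin.ext_iff] at h₁ h₂ ⊢ <;> omega
    calc ∑ q ∈ S, tailWeight q
        ≤ ∑ q ∈ S, (tailWeight (cernyWithTail m k (.inr j) q) + if q = .inr j then 1 else 0) :=
          sum_le_sum fun q _ => hpoint q
      _ ≤ ∑ q ∈ S.image (cernyWithTail m k (.inr j)), tailWeight q + 1 := by
          rw [sum_add_distrib, sum_image fun a _ b _ h =>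
            (cernyWithTail_inr_involutive hj).injective h, sum_ite_eq']
          gcongr
          split_ifs <;> simp
      _ = _ := by simp

theorem sum_univ_tailWeight [NeZero m] :
    ∑ q : ZMod m ⊕ Fin k, tailWeight q = (k + 1) * k / 2 := by
  have hshift := sum_range_succ' (fun i => i) k
  rw [add_zero] at hshift
  rw [Fintype.sum_sum_type]
  simp only [tailWeight, Sum.elim_inl, Sum.elim_inr, sum_const_zero, zero_add]
  rw [Fin.sum_univ_eq_sum_range (fun i => i + 1), ← hshift, sum_range_id, Nat.add_sub_cancel]

theorem le_length_of_isSyncWord_cernyWithTail [NeZero m] {w : List (Bool ⊕ Fin k)}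
    (hw : IsSyncWord (cernyWithTail m k) w) : (m - 1) ^ 2 + (k + 1) * k / 2 ≤ w.length := by
  obtain ⟨q₀, hq₀⟩ := hw
  have hcore : (m - 1) ^ 2 ≤ w.countP Sum.isLeft := by
    have hsync : IsSyncWord (cerny m) (w.filterMap Sum.getLeft?) :=
      ⟨_, fun z => Sum.inl_injective <| by
        rw [← wordAct_cernyWithTail_inl, ← wordAct_cernyWithTail_inl, hq₀, hq₀ (.inl 0)]⟩
    have hlen : (w.filterMap Sum.getLeft?).length = w.countP Sum.isLeft := by
      rw [List.length_filterMap_eq_countP]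
      exact List.countP_congr fun x _ => by cases x <;> simp
    exact hlen ▸ sq_le_length_of_isSyncWord_cerny hsync
  have htail : (k + 1) * k / 2 ≤ w.countP Sum.isRight := by
    have hpot := le_potential_image_wordAct_add_countP _ (fun S => ∑ q ∈ S, tailWeight q)
      Sum.isRight (sum_tailWeight_le_sum_image (m := m)) w univ
    have himage : univ.image (wordAct (cernyWithTail m k) w) = {q₀} := by
      ext q
      simp [hq₀, eq_comm]
    have hq₀core : tailWeight q₀ = 0 := by
      rw [← hq₀ (.inl 0), wordAct_cernyWithTail_inl]
      rfl
    simpa [himage, hq₀core, sum_univ_tailWeight (m := m)] using hpot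
  have hlen : w.length = w.countP Sum.isLeft + w.countP Sum.isRight := by
    rw [List.length_eq_countP_add_countP Sum.isLeft]
    exact congrArg _ (List.countP_congr fun x _ => by cases x <;> simp)
  omega

theorem reachableFromAll_cernyWithTail [NeZero m] :
    reachableFromAll (cernyWithTail m k) = Set.range .inl := by
  ext q
  constructor
  · intro h
    obtain ⟨w, hw⟩ := h (.inl 0)
    rw [← hw, wordAct_cernyWithTail_inl]
    exact ⟨_, rfl⟩
  · rintro ⟨z, rfl⟩ p
    obtain ⟨q₁, hq₁⟩ := isSyncWord_cernyWithTailSyncWord m k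
    obtain ⟨z₁, rfl⟩ : ∃ z₁, Sum.inl z₁ = q₁ :=
      ⟨_, (wordAct_cernyWithTail_inl _ 0).symm.trans (hq₁ (.inl 0))⟩
    refine ⟨cernyWithTailSyncWord m k ++ (List.replicate (z - z₁).val true).map .inl, ?_⟩
    rw [wordAct_append, hq₁, wordAct_cernyWithTail_map_inl, wordAct_cerny_replicate_true,
      ZMod.natCast_zmod_val, add_sub_cancel]

end LowerBound

theorem exists_nontransitive_dfa_with_sync_length_general (n m : ℕ)
    (hm1 : 1 ≤ m) (hm2 : m ≤ n - 1) :
    ∃ (σ : Type) (_ : Fintype σ) (act : σ → Fin n → Fin n),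
      {q : Fin n | ∀ p : Fin n, ∃ w : List σ, wordAct act w p = q}.ncard = m ∧
      (∃ w : List σ, (∃ q0 : Fin n, ∀ q, wordAct act w q = q0) ∧
        w.length = (m - 1) ^ 2 + (n - m + 1) * (n - m) / 2) ∧
      (∀ w : List σ, (∃ q0 : Fin n, ∀ q, wordAct act w q = q0) →
        (m - 1) ^ 2 + (n - m + 1) * (n - m) / 2 ≤ w.length) := by
  have : NeZero m := ⟨by omega⟩
  let e : ZMod m ⊕ Fin (n - m) ≃ Fin n := Fintype.equivFinOfCardEq
    (by simp only [Fintype.card_sum, ZMod.card, Fintype.card_fin]; omega)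
  refine ⟨Bool ⊕ Fin (n - m), inferInstance, fun x => e.conj (cernyWithTail m (n - m) x),
    ?_, ⟨cernyWithTailSyncWord m (n - m), ?_, length_cernyWithTailSyncWord m (n - m)⟩,
    fun w hw => le_length_of_isSyncWord_cernyWithTail ((isSyncWord_conj_iff _ e w).1 hw)⟩
  · change (reachableFromAll _).ncard = m
    rw [reachableFromAll_conj, Set.ncard_image_of_injective _ e.injective,
      reachableFromAll_cernyWithTail, Set.ncard_range_of_injective Sum.inl_injective,
      Nat.card_zmod]
  · exact (isSyncWord_conj_iff _ e _).2 (isSyncWord_cernyWithTailSyncWord m (n - m))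

/-- for every `n ≥ 2` and `1 ≤ m ≤ n-1` there exists a
synchronizing DFA with `n` states whose set of states reachable from every
state has size `m`, and whose synchronization length is exactly
`(m-1)^2 + (n-m+1)(n-m)/2`. -/
theorem exists_nontransitive_dfa_with_sync_length (n m : ℕ) (hn : 2 ≤ n)
    (hm1 : 1 ≤ m) (hm2 : m ≤ n - 1) :
    ∃ (σ : Type) (_ : Fintype σ) (act : σ → Fin n → Fin n),
      {q : Fin n | ∀ p : Fin n, ∃ w : List σ, wordAct act w p = q}.ncard = m ∧
      (∃ w : List σ, (∃ q0 : Fin n, ∀ q, wordAct act w q = q0) ∧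
        w.length = (m - 1) ^ 2 + (n - m + 1) * (n - m) / 2) ∧
      (∀ w : List σ, (∃ q0 : Fin n, ∀ q, wordAct act w q = q0) →
        (m - 1) ^ 2 + (n - m + 1) * (n - m) / 2 ≤ w.length) :=
  exists_nontransitive_dfa_with_sync_length_general n m hm1 hm2
end
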